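/- arXiv:math-ph/0005011 — 2 statements merged into one kernel-verified Lean document; each statement's English description precedes it below -/
import Mathlib

section
/- Let H₁ and H₂ be finite-dimensional complex Hilbert spaces, let ψ ∈ H₁ ⊗ H₂ be a unit vector with Schmidt decomposition ψ = Σᵢ √pᵢ · φᵢ ⊗ χᵢ (with {φᵢ}, {χᵢ} orthonormal bases and pᵢ ≥ 0, Σᵢ pᵢ = 1), and let P_ψ be the orthogonal projection onto the span of ψ. Then ‖P_ψ‖_γ = Σ_{i,j} √(pᵢ pⱼ) = (Σᵢ √pᵢ)². -/
/-!
Expanding `ψ = ∑ₖ √pₖ φₖ ⊗ χₖ` gives `P_ψ = ∑ₖₗ (√(pₖ pₗ) |φₖ⟩⟨φₗ|) ⊗ |χₖ⟩⟨χₗ|`, a decomposition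
into products of rank-one operators with trace norms `√(pₖ pₗ)` and `1`; so `‖P_ψ‖_γ ≤ (∑ₖ √pₖ)²`.
For the reverse inequality, test decompositions `P_ψ = ∑ᵢ uᵢ ⊗ vᵢ` against `W = ∑ₖ φₖ ⊗ χₖ`. On one
side `⟨W, P_ψ W⟩ = |⟨W, ψ⟩|² = (∑ₖ √pₖ)²`. On the other,
`⟨W, (u ⊗ v) W⟩ = ∑ₖₗ ⟨φₖ, u φₗ⟩ ⟨χₖ, v χₗ⟩`, which Cauchy–Schwarz bounds by the product of the
Hilbert–Schmidt norms of the compressions of `u` and `v` to the orthonormal families; by Bessel's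
inequality these are at most `‖u‖₂ ≤ ‖u‖₁` and `‖v‖₂ ≤ ‖v‖₁`.
-/

open Matrix
open scoped Kronecker ComplexOrder

noncomputable def traceNorm {n : Type*} [Fintype n] [DecidableEq n] (A : Matrix n n ℂ) : ℝ :=
  ((Matrix.posSemidef_conjTranspose_mul_self A).1.eigenvectorUnitary.1 *
    diagonal (((↑) : ℝ → ℂ) ∘ (√·) ∘ (Matrix.posSemidef_conjTranspose_mul_self A).1.eigenvalues) *
    (star (Matrix.posSemidef_conjTranspose_mul_self A).1.eigenvectorUnitary : Matrix n n ℂ)).trace.re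

noncomputable def gammaNorm {m n : Type*} [Fintype m] [DecidableEq m] [Fintype n] [DecidableEq n]
    (t : Matrix (m × n) (m × n) ℂ) : ℝ :=
  sInf { c : ℝ | ∃ (r : ℕ) (u : Fin r → Matrix m m ℂ) (v : Fin r → Matrix n n ℂ),
    t = ∑ i, (u i) ⊗ₖ (v i) ∧ c = ∑ i, traceNorm (u i) * traceNorm (v i) }

def IsDensity {n : Type*} [Fintype n] (ρ : Matrix n n ℂ) : Prop :=
  ρ.PosSemidef ∧ ρ.trace = 1

def evec {ι : Type*} (ψ : EuclideanSpace ℂ ι) : ι → ℂ := ψ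

noncomputable def tensorVec {ι κ : Type*} (a : EuclideanSpace ℂ ι) (b : EuclideanSpace ℂ κ) :
    EuclideanSpace ℂ (ι × κ) :=
  (WithLp.equiv 2 _).symm (fun p => evec a p.1 * evec b p.2)

noncomputable def projOnto {ι : Type*} (ψ : EuclideanSpace ℂ ι) : Matrix ι ι ℂ :=
  Matrix.vecMulVec (evec ψ) (star (evec ψ))

open scoped InnerProductSpace

lemma evec_sum {ι κ : Type*} (s : Finset κ) (x : κ → EuclideanSpace ℂ ι) :
    evec (∑ k ∈ s, x k) = ∑ k ∈ s, evec (x k) :=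
  WithLp.ofLp_sum _ _ s x

lemma star_evec_dotProduct_evec {ι : Type*} [Fintype ι] (x y : EuclideanSpace ℂ ι) :
    star (evec x) ⬝ᵥ evec y = ⟪x, y⟫_ℂ := by
  rw [EuclideanSpace.inner_eq_star_dotProduct, dotProduct_comm]
  rfl

section TraceNorm

variable {n : Type*} [Fintype n] [DecidableEq n]

lemma traceNorm_eq_sum_sqrt_eigenvalues (A : Matrix n n ℂ) :
    traceNorm A = ∑ i, √((posSemidef_conjTranspose_mul_self A).1.eigenvalues i) := by
  unfold traceNorm
  rw [trace_mul_cycle, mem_unitaryGroup_iff'.mp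
    (posSemidef_conjTranspose_mul_self A).1.eigenvectorUnitary.2, Matrix.one_mul, trace_diagonal]
  simp

lemma traceNorm_nonneg (A : Matrix n n ℂ) : 0 ≤ traceNorm A := by
  rw [traceNorm_eq_sum_sqrt_eigenvalues]
  positivity

omit [DecidableEq n] in
lemma sum_norm_sq_eq_re_trace_conjTranspose_mul_self {m : Type*} [Fintype m] (A : Matrix m n ℂ) :
    ∑ i, ∑ j, ‖A i j‖ ^ 2 = (Aᴴ * A).trace.re := by
  simp only [trace, diag, mul_apply, conjTranspose_apply, Complex.re_sum]
  rw [Finset.sum_comm]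
  refine Finset.sum_congr rfl fun j _ => Finset.sum_congr rfl fun i _ => ?_
  rw [RCLike.star_def, RCLike.conj_mul]
  norm_cast

lemma sum_norm_sq_le_traceNorm_sq (A : Matrix n n ℂ) :
    ∑ i, ∑ j, ‖A i j‖ ^ 2 ≤ traceNorm A ^ 2 := by
  have hA := (posSemidef_conjTranspose_mul_self A).1
  calc ∑ i, ∑ j, ‖A i j‖ ^ 2 = ∑ i, √(hA.eigenvalues i) ^ 2 := by
        rw [sum_norm_sq_eq_re_trace_conjTranspose_mul_self, hA.trace_eq_sum_eigenvalues]
        simp [Real.sq_sqrt ((posSemidef_conjTranspose_mul_self A).eigenvalues_nonneg _)]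
    _ ≤ (∑ i, √(hA.eigenvalues i)) ^ 2 :=
        Finset.sum_sq_le_sq_sum_of_nonneg fun i _ => Real.sqrt_nonneg _
    _ = traceNorm A ^ 2 := by rw [traceNorm_eq_sum_sqrt_eigenvalues]

lemma traceNorm_eq_re_trace_of_sq_eq {A B : Matrix n n ℂ} (hB : B.PosSemidef)
    (h : B ^ 2 = Aᴴ * A) : traceNorm A = B.trace.re := by
  have hA := posSemidef_conjTranspose_mul_self A
  have hsqrt : cfc Real.sqrt (Aᴴ * A) = B := by
    open scoped MatrixOrder in
    rw [← cfcₙ_eq_cfc (hf0 := by simp), ← CFC.sqrt_eq_real_sqrt (Aᴴ * A) hA.nonneg,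
      CFC.sqrt_eq_iff _ _ hA.nonneg hB.nonneg, ← sq, h]
  rw [← hsqrt, hA.1.cfc_eq, IsHermitian.cfc, Unitary.conjStarAlgAut_apply]
  rfl

lemma traceNorm_vecMulVec (x y : EuclideanSpace ℂ n) :
    traceNorm (vecMulVec (evec x) (star (evec y))) = ‖x‖ * ‖y‖ := by
  set P := vecMulVec (evec y) (star (evec y))
  have hP : P * P = (‖y‖ : ℂ) ^ 2 • P := by
    rw [vecMulVec_mul_vecMulVec, star_evec_dotProduct_evec, inner_self_eq_norm_sq_to_K,
      ← vecMulVec_smul]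
    rfl
  have hA : (vecMulVec (evec x) (star (evec y)))ᴴ * vecMulVec (evec x) (star (evec y))
      = (‖x‖ : ℂ) ^ 2 • P := by
    rw [conjTranspose_vecMulVec, star_star, vecMulVec_mul_vecMulVec, star_evec_dotProduct_evec,
      inner_self_eq_norm_sq_to_K, ← vecMulVec_smul]
    rfl
  have htr : P.trace = (‖y‖ : ℂ) ^ 2 := by
    rw [trace_vecMulVec, dotProduct_comm, star_evec_dotProduct_evec, inner_self_eq_norm_sq_to_K]
    rfl
  -- `√(Aᴴ A) = (‖x‖ / ‖y‖) P`, also when `y = 0` and both sides vanish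
  have hsq : (((‖x‖ / ‖y‖ : ℝ) : ℂ) • P) ^ 2 = (‖x‖ : ℂ) ^ 2 • P := by
    rcases eq_or_ne y 0 with rfl | hy
    · simp [P, evec]
    · rw [sq, smul_mul_smul, hP, smul_smul]
      congr 1
      push_cast
      field_simp
  have hB : (((‖x‖ / ‖y‖ : ℝ) : ℂ) • P).PosSemidef :=
    (posSemidef_vecMulVec_self_star _).smul (by positivity)
  rw [traceNorm_eq_re_trace_of_sq_eq hB (hsq.trans hA.symm), trace_smul, htr, smul_eq_mul,
    ← Complex.ofReal_pow, ← Complex.ofReal_mul, Complex.ofReal_re]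
  rcases eq_or_ne ‖y‖ 0 with hy | hy
  · simp [hy]
  · field_simp

end TraceNorm

section GammaNorm

variable {m n : Type*} [Fintype m] [DecidableEq m] [Fintype n] [DecidableEq n]

lemma gammaNorm_eq_of_forall_le {κ : Type*} [Fintype κ] {t : Matrix (m × n) (m × n) ℂ}
    (u : κ → Matrix m m ℂ) (v : κ → Matrix n n ℂ) (ht : t = ∑ k, u k ⊗ₖ v k)
    (hmin : ∀ (r : ℕ) (u' : Fin r → Matrix m m ℂ) (v' : Fin r → Matrix n n ℂ),
      t = ∑ i, u' i ⊗ₖ v' i →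
        ∑ k, traceNorm (u k) * traceNorm (v k) ≤ ∑ i, traceNorm (u' i) * traceNorm (v' i)) :
    gammaNorm t = ∑ k, traceNorm (u k) * traceNorm (v k) := by
  refine IsLeast.csInf_eq ⟨?_, ?_⟩
  · let e := Fintype.equivFin κ
    exact ⟨Fintype.card κ, u ∘ e.symm, v ∘ e.symm,
      by simp only [ht, Function.comp_apply, e.symm.sum_comp (fun k => u k ⊗ₖ v k)],
      by simp only [Function.comp_apply,
        e.symm.sum_comp (fun k => traceNorm (u k) * traceNorm (v k))]⟩
  · rintro _ ⟨r, u', v', ht', rfl⟩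
    exact hmin r u' v' ht'

end GammaNorm

section TensorVec

variable {m n m' n' : Type*} [Fintype m] [Fintype n] [Fintype m'] [Fintype n']

omit [Fintype m] [Fintype n] in
lemma evec_tensorVec (a : EuclideanSpace ℂ m) (b : EuclideanSpace ℂ n) :
    evec (tensorVec a b) = fun q => evec a q.1 * evec b q.2 :=
  rfl

lemma star_dotProduct_kronecker_mulVec_tensorVec (u : Matrix m m' ℂ) (v : Matrix n n' ℂ)
    (a : EuclideanSpace ℂ m) (a' : EuclideanSpace ℂ m') (b : EuclideanSpace ℂ n)
    (b' : EuclideanSpace ℂ n') :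
    star (evec (tensorVec a b)) ⬝ᵥ ((u ⊗ₖ v) *ᵥ evec (tensorVec a' b')) =
      (star (evec a) ⬝ᵥ (u *ᵥ evec a')) * (star (evec b) ⬝ᵥ (v *ᵥ evec b')) := by
  have hmul : (u ⊗ₖ v) *ᵥ evec (tensorVec a' b') =
      fun q => (u *ᵥ evec a') q.1 * (v *ᵥ evec b') q.2 := by
    ext q
    simp only [evec_tensorVec, mulVec, dotProduct, kroneckerMap_apply, Fintype.sum_prod_type,
      Finset.sum_mul_sum]
    exact Finset.sum_congr rfl fun _ _ => Finset.sum_congr rfl fun _ _ => by ring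
  rw [hmul]
  simp only [evec_tensorVec, dotProduct, Pi.star_apply, star_mul', Fintype.sum_prod_type,
    Finset.sum_mul_sum]
  exact Finset.sum_congr rfl fun _ _ => Finset.sum_congr rfl fun _ _ => by ring

lemma inner_tensorVec (a a' : EuclideanSpace ℂ m) (b b' : EuclideanSpace ℂ n) :
    ⟪tensorVec a b, tensorVec a' b'⟫_ℂ = ⟪a, a'⟫_ℂ * ⟪b, b'⟫_ℂ := by
  classical
  simpa [star_evec_dotProduct_evec] using star_dotProduct_kronecker_mulVec_tensorVec 1 1 a a' b b'

end TensorVec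

section Orthonormal

variable {ι m n : Type*} [Fintype ι] [Fintype m] [Fintype n]

lemma Orthonormal.sum_norm_star_dotProduct_sq_le {φ : ι → EuclideanSpace ℂ n}
    (hφ : Orthonormal ℂ φ) (z : n → ℂ) :
    ∑ k, ‖star (evec (φ k)) ⬝ᵥ z‖ ^ 2 ≤ ∑ i, ‖z i‖ ^ 2 := by
  have h := hφ.sum_inner_products_le (s := Finset.univ) (WithLp.toLp 2 z)
  simp only [← star_evec_dotProduct_evec, EuclideanSpace.norm_sq_eq] at h
  exact h

lemma Orthonormal.sum_sum_norm_star_dotProduct_mulVec_sq_le {φ : ι → EuclideanSpace ℂ n}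
    (hφ : Orthonormal ℂ φ) (u : Matrix n n ℂ) :
    ∑ k, ∑ l, ‖star (evec (φ k)) ⬝ᵥ (u *ᵥ evec (φ l))‖ ^ 2 ≤ ∑ i, ∑ j, ‖u i j‖ ^ 2 := by
  calc ∑ k, ∑ l, ‖star (evec (φ k)) ⬝ᵥ (u *ᵥ evec (φ l))‖ ^ 2
      = ∑ l, ∑ k, ‖star (evec (φ k)) ⬝ᵥ (u *ᵥ evec (φ l))‖ ^ 2 := Finset.sum_comm
    _ ≤ ∑ l, ∑ i, ‖(u *ᵥ evec (φ l)) i‖ ^ 2 :=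
        Finset.sum_le_sum fun l _ => hφ.sum_norm_star_dotProduct_sq_le _
    _ = ∑ i, ∑ l, ‖star (evec (φ l)) ⬝ᵥ star (u i)‖ ^ 2 := by
        rw [Finset.sum_comm]
        simp only [star_dotProduct_star, norm_star]
        rfl
    _ ≤ ∑ i, ∑ j, ‖u i j‖ ^ 2 :=
        Finset.sum_le_sum fun i _ => (hφ.sum_norm_star_dotProduct_sq_le _).trans_eq (by simp)

variable [DecidableEq m] [DecidableEq n] {φ : ι → EuclideanSpace ℂ m} {χ : ι → EuclideanSpace ℂ n}

lemma norm_star_dotProduct_kronecker_mulVec_le (hφ : Orthonormal ℂ φ) (hχ : Orthonormal ℂ χ)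
    (u : Matrix m m ℂ) (v : Matrix n n ℂ) :
    ‖star (evec (∑ k, tensorVec (φ k) (χ k))) ⬝ᵥ
        ((u ⊗ₖ v) *ᵥ evec (∑ k, tensorVec (φ k) (χ k)))‖ ≤ traceNorm u * traceNorm v := by
  set f : ι × ι → ℂ := fun kl => star (evec (φ kl.1)) ⬝ᵥ (u *ᵥ evec (φ kl.2))
  set g : ι × ι → ℂ := fun kl => star (evec (χ kl.1)) ⬝ᵥ (v *ᵥ evec (χ kl.2))
  have hexpand : star (evec (∑ k, tensorVec (φ k) (χ k))) ⬝ᵥ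
      ((u ⊗ₖ v) *ᵥ evec (∑ k, tensorVec (φ k) (χ k))) = ∑ kl, f kl * g kl := by
    simp only [evec_sum, star_sum, sum_dotProduct, mulVec_sum, dotProduct_sum,
      star_dotProduct_kronecker_mulVec_tensorVec, Fintype.sum_prod_type]
    exact Finset.sum_comm
  have hf : √(∑ kl, ‖f kl‖ ^ 2) ≤ traceNorm u :=
    Real.sqrt_le_iff.mpr ⟨traceNorm_nonneg u, by
      rw [Fintype.sum_prod_type]
      exact (hφ.sum_sum_norm_star_dotProduct_mulVec_sq_le u).trans
        (sum_norm_sq_le_traceNorm_sq u)⟩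
  have hg : √(∑ kl, ‖g kl‖ ^ 2) ≤ traceNorm v :=
    Real.sqrt_le_iff.mpr ⟨traceNorm_nonneg v, by
      rw [Fintype.sum_prod_type]
      exact (hχ.sum_sum_norm_star_dotProduct_mulVec_sq_le v).trans
        (sum_norm_sq_le_traceNorm_sq v)⟩
  calc _ = ‖∑ kl, f kl * g kl‖ := by rw [hexpand]
    _ ≤ ∑ kl, ‖f kl‖ * ‖g kl‖ := (norm_sum_le _ _).trans_eq (by simp only [norm_mul])
    _ ≤ √(∑ kl, ‖f kl‖ ^ 2) * √(∑ kl, ‖g kl‖ ^ 2) := Real.sum_mul_le_sqrt_mul_sqrt _ _ _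
    _ ≤ traceNorm u * traceNorm v := mul_le_mul hf hg (Real.sqrt_nonneg _) (traceNorm_nonneg u)

lemma norm_star_dotProduct_mulVec_le_of_eq_sum_kronecker (hφ : Orthonormal ℂ φ)
    (hχ : Orthonormal ℂ χ) {κ : Type*} [Fintype κ] {t : Matrix (m × n) (m × n) ℂ}
    (u : κ → Matrix m m ℂ) (v : κ → Matrix n n ℂ) (ht : t = ∑ i, u i ⊗ₖ v i) :
    ‖star (evec (∑ k, tensorVec (φ k) (χ k))) ⬝ᵥ (t *ᵥ evec (∑ k, tensorVec (φ k) (χ k)))‖ ≤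
      ∑ i, traceNorm (u i) * traceNorm (v i) := by
  rw [ht, sum_mulVec, dotProduct_sum]
  exact (norm_sum_le _ _).trans
    (Finset.sum_le_sum fun i _ => norm_star_dotProduct_kronecker_mulVec_le hφ hχ _ _)

end Orthonormal

section Projection

variable {ι m n : Type*} [Fintype ι] [Fintype m] [Fintype n]

lemma norm_star_dotProduct_projOnto_mulVec (ψ w : EuclideanSpace ℂ m) :
    ‖star (evec w) ⬝ᵥ (projOnto ψ *ᵥ evec w)‖ = ‖⟪w, ψ⟫_ℂ‖ ^ 2 := by
  rw [projOnto, vecMulVec_mulVec, dotProduct_smul, star_evec_dotProduct_evec,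
    star_evec_dotProduct_evec, op_smul_eq_mul, norm_mul, norm_inner_symm, sq]

lemma inner_sum_tensorVec_sum_smul_tensorVec {φ : ι → EuclideanSpace ℂ m}
    {χ : ι → EuclideanSpace ℂ n} (hφ : Orthonormal ℂ φ) (hχ : Orthonormal ℂ χ) (c : ι → ℝ) :
    ⟪∑ k, tensorVec (φ k) (χ k), ∑ k, c k • tensorVec (φ k) (χ k)⟫_ℂ = ∑ k, (c k : ℂ) := by
  classical
  simp [inner_tensorVec, orthonormal_iff_ite.mp hφ, orthonormal_iff_ite.mp hχ]

omit [Fintype m] [Fintype n] in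
lemma projOnto_sum_smul_tensorVec (c : ι → ℝ) (a : ι → EuclideanSpace ℂ m)
    (b : ι → EuclideanSpace ℂ n) :
    projOnto (∑ k, c k • tensorVec (a k) (b k)) =
      ∑ kl : ι × ι, vecMulVec (evec ((c kl.1 * c kl.2) • a kl.1)) (star (evec (a kl.2))) ⊗ₖ
        vecMulVec (evec (b kl.1)) (star (evec (b kl.2))) := by
  ext q r
  simp only [projOnto, vecMulVec_apply, evec_sum, Finset.sum_apply, Pi.star_apply, star_sum,
    Finset.sum_mul_sum, Matrix.sum_apply, Fintype.sum_prod_type, kroneckerMap_apply]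
  refine Finset.sum_congr rfl fun k _ => Finset.sum_congr rfl fun l _ => ?_
  simp only [evec, tensorVec, WithLp.equiv_symm_apply, PiLp.smul_apply, Complex.real_smul,
    star_mul', RCLike.star_def, Complex.conj_ofReal, Complex.ofReal_mul]
  ring

end Projection

theorem gammaNorm_projOnto_schmidt_general (m n : ℕ) {ι : Type*} [Fintype ι]
    (p : ι → ℝ) (φ : ι → EuclideanSpace ℂ (Fin m)) (χ : ι → EuclideanSpace ℂ (Fin n))
    (hp : ∀ i, 0 ≤ p i)
    (hφ : Orthonormal ℂ φ) (hχ : Orthonormal ℂ χ)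
    (ψ : EuclideanSpace ℂ (Fin m × Fin n))
    (hψ : ψ = ∑ i, Real.sqrt (p i) • tensorVec (φ i) (χ i)) :
    gammaNorm (projOnto ψ) = ∑ i, ∑ j, Real.sqrt (p i * p j) ∧
    gammaNorm (projOnto ψ) = (∑ i, Real.sqrt (p i)) ^ 2 := by
  subst hψ
  have hsum : ∑ i, ∑ j, √(p i * p j) = (∑ i, √(p i)) ^ 2 := by
    simp_rw [sq, Finset.sum_mul_sum, Real.sqrt_mul (hp _)]
  suffices hγ : gammaNorm (projOnto (∑ i, √(p i) • tensorVec (φ i) (χ i))) =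
      (∑ i, √(p i)) ^ 2 from ⟨hγ.trans hsum.symm, hγ⟩
  have hcost (k l : ι) :
      traceNorm (vecMulVec (evec ((√(p k) * √(p l)) • φ k)) (star (evec (φ l)))) *
        traceNorm (vecMulVec (evec (χ k)) (star (evec (χ l)))) = √(p k) * √(p l) := by
    simp [traceNorm_vecMulVec, norm_smul, hφ.1, hχ.1, abs_of_nonneg, Real.sqrt_nonneg]
  rw [gammaNorm_eq_of_forall_le _ _ (projOnto_sum_smul_tensorVec _ φ χ)] <;>
    simp only [Fintype.sum_prod_type, hcost, ← Finset.sum_mul_sum, ← sq]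
  intro r u v ht
  calc (∑ i, √(p i)) ^ 2
      = ‖⟪∑ k, tensorVec (φ k) (χ k), ∑ k, √(p k) • tensorVec (φ k) (χ k)⟫_ℂ‖ ^ 2 := by
        rw [inner_sum_tensorVec_sum_smul_tensorVec hφ hχ, ← Complex.ofReal_sum,
          Complex.norm_real, Real.norm_eq_abs, abs_of_nonneg (by positivity)]
    _ = _ := (norm_star_dotProduct_projOnto_mulVec _ _).symm
    _ ≤ _ := norm_star_dotProduct_mulVec_le_of_eq_sum_kronecker hφ hχ u v ht

/-- The greatest cross norm of the projection onto a unit vector with Schmidt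
coefficients `p` equals `(∑ i, √(p i))² = ∑ i j, √(p i * p j)`. -/
theorem gammaNorm_projOnto_schmidt (m n : ℕ) {ι : Type*} [Fintype ι]
    (p : ι → ℝ) (φ : ι → EuclideanSpace ℂ (Fin m)) (χ : ι → EuclideanSpace ℂ (Fin n))
    (hp : ∀ i, 0 ≤ p i) (hpsum : ∑ i, p i = 1)
    (hφ : Orthonormal ℂ φ) (hχ : Orthonormal ℂ χ)
    (ψ : EuclideanSpace ℂ (Fin m × Fin n)) (hψnorm : ‖ψ‖ = 1)
    (hψ : ψ = ∑ i, Real.sqrt (p i) • tensorVec (φ i) (χ i)) :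
    gammaNorm (projOnto ψ) = ∑ i, ∑ j, Real.sqrt (p i * p j) ∧
    gammaNorm (projOnto ψ) = (∑ i, Real.sqrt (p i)) ^ 2 :=
  gammaNorm_projOnto_schmidt_general m n p φ χ hp hφ hχ ψ hψ
end

section
/- Let H₁ and H₂ be finite-dimensional complex Hilbert spaces, let U₁ and U₂ be unitary operators on H₁ and H₂ respectively, and let σ be an operator on H₁ ⊗ H₂. Then ‖(U₁ ⊗ U₂) σ (U₁† ⊗ U₂†)‖_γ = ‖σ‖_γ. -/
open Matrix
open scoped Kronecker ComplexOrder

/-!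
A unitary factor on either side leaves the trace norm unchanged; on the right this is because
`√((A V)ᴴ (A V)) = Vᴴ √(Aᴴ A) V`. Conjugating each term of a decomposition `σ = ∑ uᵢ ⊗ vᵢ` by the
local unitaries therefore yields a decomposition of the conjugated operator of the same cost, and
undoing the conjugation gives the converse, so both operators have the same set of costs.
-/

section sqrt

variable {A : Type*} [PartialOrder A] [Ring A] [TopologicalSpace A] [StarRing A] [Algebra ℝ A]
  [StarOrderedRing A] [ContinuousFunctionalCalculus ℝ A IsSelfAdjoint] [NonnegSpectrumClass ℝ A]
  [IsSemitopologicalRing A] [T2Space A]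

lemma CFC.sqrt_star_mul_mul_of_mem_unitary {u : A} (hu : u ∈ unitary A) {a : A} (ha : 0 ≤ a) :
    CFC.sqrt (star u * a * u) = star u * CFC.sqrt a * u := by
  refine CFC.sqrt_unique ?_ (star_left_conjugate_nonneg (CFC.sqrt_nonneg a) u)
  calc star u * CFC.sqrt a * u * (star u * CFC.sqrt a * u)
      = star u * CFC.sqrt a * (u * star u) * CFC.sqrt a * u := by simp only [mul_assoc]
    _ = star u * a * u := by
      rw [Unitary.mul_star_self_of_mem hu, mul_one, mul_assoc (star u), CFC.sqrt_mul_sqrt_self a]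

end sqrt

section traceNorm

open scoped MatrixOrder

variable {n : Type*} [Fintype n] [DecidableEq n]

lemma traceNorm_eq_re_trace_sqrt (A : Matrix n n ℂ) :
    traceNorm A = (CFC.sqrt (Aᴴ * A)).trace.re := by
  have hA := posSemidef_conjTranspose_mul_self A
  rw [CFC.sqrt_eq_real_sqrt (Aᴴ * A) hA.nonneg, cfcₙ_eq_cfc, hA.1.cfc_eq]
  rfl

lemma traceNorm_unitary_mul {U : Matrix n n ℂ} (hU : U ∈ unitaryGroup n ℂ) (A : Matrix n n ℂ) :
    traceNorm (U * A) = traceNorm A := by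
  have hUU : Uᴴ * U = 1 := Unitary.star_mul_self_of_mem hU
  rw [traceNorm_eq_re_trace_sqrt, traceNorm_eq_re_trace_sqrt, conjTranspose_mul,
    Matrix.mul_assoc, ← Matrix.mul_assoc Uᴴ, hUU, Matrix.one_mul]

lemma traceNorm_mul_unitary {V : Matrix n n ℂ} (hV : V ∈ unitaryGroup n ℂ) (A : Matrix n n ℂ) :
    traceNorm (A * V) = traceNorm A := by
  have hAV : (A * V)ᴴ * (A * V) = star V * (Aᴴ * A) * V := by
    simp only [conjTranspose_mul, star_eq_conjTranspose, Matrix.mul_assoc]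
  rw [traceNorm_eq_re_trace_sqrt, traceNorm_eq_re_trace_sqrt, hAV,
    CFC.sqrt_star_mul_mul_of_mem_unitary hV (posSemidef_conjTranspose_mul_self A).nonneg,
    trace_mul_cycle, Unitary.mul_star_self_of_mem hV, Matrix.one_mul]

end traceNorm

section gammaNorm

variable {m n : Type*} [Fintype m] [DecidableEq m] [Fintype n] [DecidableEq n]

def gammaCosts (t : Matrix (m × n) (m × n) ℂ) : Set ℝ :=
  { c : ℝ | ∃ (r : ℕ) (u : Fin r → Matrix m m ℂ) (v : Fin r → Matrix n n ℂ),
    t = ∑ i, (u i) ⊗ₖ (v i) ∧ c = ∑ i, traceNorm (u i) * traceNorm (v i) }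

lemma gammaNorm_eq_sInf_gammaCosts (t : Matrix (m × n) (m × n) ℂ) :
    gammaNorm t = sInf (gammaCosts t) := rfl

variable {U₁ V₁ : Matrix m m ℂ} {U₂ V₂ : Matrix n n ℂ}

lemma gammaCosts_subset_kronecker_mul_mul (hU₁ : U₁ ∈ unitaryGroup m ℂ)
    (hV₁ : V₁ ∈ unitaryGroup m ℂ) (hU₂ : U₂ ∈ unitaryGroup n ℂ) (hV₂ : V₂ ∈ unitaryGroup n ℂ)
    (σ : Matrix (m × n) (m × n) ℂ) :
    gammaCosts σ ⊆ gammaCosts ((U₁ ⊗ₖ U₂) * σ * (V₁ ⊗ₖ V₂)) := by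
  rintro c ⟨r, u, v, rfl, rfl⟩
  refine ⟨r, fun i => U₁ * u i * V₁, fun i => U₂ * v i * V₂, ?_, ?_⟩
  · simp only [Finset.mul_sum, Finset.sum_mul, mul_kronecker_mul]
  · simp only [traceNorm_mul_unitary hV₁, traceNorm_unitary_mul hU₁, traceNorm_mul_unitary hV₂,
      traceNorm_unitary_mul hU₂]

lemma gammaNorm_kronecker_mul_mul (hU₁ : U₁ ∈ unitaryGroup m ℂ)
    (hV₁ : V₁ ∈ unitaryGroup m ℂ) (hU₂ : U₂ ∈ unitaryGroup n ℂ) (hV₂ : V₂ ∈ unitaryGroup n ℂ)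
    (σ : Matrix (m × n) (m × n) ℂ) :
    gammaNorm ((U₁ ⊗ₖ U₂) * σ * (V₁ ⊗ₖ V₂)) = gammaNorm σ := by
  have hU := kronecker_mem_unitary hU₁ hU₂
  have hV := kronecker_mem_unitary hV₁ hV₂
  have hσ : (U₁ᴴ ⊗ₖ U₂ᴴ) * ((U₁ ⊗ₖ U₂) * σ * (V₁ ⊗ₖ V₂)) * (V₁ᴴ ⊗ₖ V₂ᴴ) = σ := by
    rw [← conjTranspose_kronecker, ← conjTranspose_kronecker, ← star_eq_conjTranspose,
      ← star_eq_conjTranspose, ← mul_assoc, ← mul_assoc, Unitary.star_mul_self_of_mem hU,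
      one_mul, mul_assoc, Unitary.mul_star_self_of_mem hV, mul_one]
  rw [gammaNorm_eq_sInf_gammaCosts, gammaNorm_eq_sInf_gammaCosts]
  refine congrArg sInf
    (Set.Subset.antisymm ?_ (gammaCosts_subset_kronecker_mul_mul hU₁ hV₁ hU₂ hV₂ σ))
  conv_rhs => rw [← hσ]
  exact gammaCosts_subset_kronecker_mul_mul (Unitary.star_mem hU₁) (Unitary.star_mem hV₁)
    (Unitary.star_mem hU₂) (Unitary.star_mem hV₂) _

end gammaNorm

/-- Local unitary conjugation leaves the greatest cross norm invariant. -/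
theorem gammaNorm_local_unitary_invariant {m n : Type*}
    [Fintype m] [DecidableEq m] [Fintype n] [DecidableEq n]
    (U₁ : Matrix m m ℂ) (U₂ : Matrix n n ℂ)
    (hU₁ : U₁ ∈ Matrix.unitaryGroup m ℂ) (hU₂ : U₂ ∈ Matrix.unitaryGroup n ℂ)
    (σ : Matrix (m × n) (m × n) ℂ) :
    gammaNorm ((U₁ ⊗ₖ U₂) * σ * (U₁ᴴ ⊗ₖ U₂ᴴ)) = gammaNorm σ :=
  gammaNorm_kronecker_mul_mul hU₁ (Unitary.star_mem hU₁) hU₂ (Unitary.star_mem hU₂) σ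
end
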